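/- arXiv:2112.07300 — 5 statements merged into one kernel-verified Lean document; each statement's English description precedes it below -/
import Mathlib

section
/- Let n ≥ 2, β > 0, R ≥ 1, and define E(R) = (β · Per(B_1) · Φ_n'(1)) / (Φ_n'(R) + β(Φ_n(R) − Φ_n(1))), where Φ_n(ρ) = log ρ if n = 2 and Φ_n(ρ) = −1/((n−2)ρ^{n−2}) if n ≥ 3, Φ_n'(ρ) = ρ^{1−n}, and Per(B_1) = n·ω_n is the perimeter of the unit ball. Then E'(R) ≤ 0 if and only if R ≥ (n−1)/β. -/
open Real Set MeasureTheory

/-!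
The energy is `E(R) = C / D(R)` with a constant `C > 0` and a denominator
`D(R) = R^{1-n} + β (Φ_n(R) - Φ_n(1))` that is positive for `R ≥ 1` since `Φ_n` is increasing.
Hence `E'(R) ≤ 0` iff `D'(R) ≥ 0`, and `D'(R) = (1 - n) R^{-n} + β R^{1-n} = R^{-n} (1 - n + β R)`.
-/

noncomputable def fundamentalSolution (n : ℕ) (ρ : ℝ) : ℝ :=
  if n = 2 then Real.log ρ else -1 / (((n : ℝ) - 2) * ρ ^ (n - 2))

theorem hasDerivAt_fundamentalSolution {n : ℕ} (hn : 2 ≤ n) {ρ : ℝ} (hρ : ρ ≠ 0) :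
    HasDerivAt (fundamentalSolution n) (ρ ^ ((1 : ℤ) - n)) ρ := by
  by_cases h2 : n = 2
  · subst h2
    have hlog : fundamentalSolution 2 = Real.log := by
      funext x
      simp [fundamentalSolution]
    rw [hlog]
    convert Real.hasDerivAt_log hρ using 1
    norm_num
  · have hn2 : ((n : ℝ) - 2) ≠ 0 := by
      have : (3 : ℝ) ≤ n := by exact_mod_cast (show 3 ≤ n by omega)
      linarith
    have hcast : (((n - 2 : ℕ) : ℤ) : ℝ) = (n : ℝ) - 2 := by
      push_cast [Nat.cast_sub hn]
      ring
    have hfun : fundamentalSolution n = fun x ↦ -((n : ℝ) - 2)⁻¹ * x ^ (-((n - 2 : ℕ) : ℤ)) := by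
      funext x
      simp only [fundamentalSolution, h2, if_false, zpow_neg, zpow_natCast]
      rw [div_eq_mul_inv, mul_inv]
      ring
    rw [hfun]
    refine ((hasDerivAt_zpow (-((n - 2 : ℕ) : ℤ)) ρ (Or.inl hρ)).const_mul
      (-((n : ℝ) - 2)⁻¹)).congr_deriv ?_
    rw [show -((n - 2 : ℕ) : ℤ) - 1 = (1 : ℤ) - n by omega]
    push_cast [hcast]
    field_simp

theorem strictMonoOn_fundamentalSolution {n : ℕ} (hn : 2 ≤ n) :
    StrictMonoOn (fundamentalSolution n) (Ioi 0) :=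
  strictMonoOn_of_hasDerivWithinAt_pos (convex_Ioi 0)
    (fun _ hx ↦ (hasDerivAt_fundamentalSolution hn (ne_of_gt hx)).continuousAt.continuousWithinAt)
    (fun _ hx ↦ (hasDerivAt_fundamentalSolution hn
      (ne_of_gt (interior_subset (s := Ioi (0 : ℝ)) hx))).hasDerivWithinAt)
    (fun _ hx ↦ zpow_pos (interior_subset (s := Ioi (0 : ℝ)) hx) _)

theorem deriv_const_div_nonpos_iff {f : ℝ → ℝ} {f' c x : ℝ} (hc : 0 < c) (hf : HasDerivAt f f' x)
    (hx : f x ≠ 0) : deriv (fun y ↦ c / f y) x ≤ 0 ↔ 0 ≤ f' := by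
  have hdiv : HasDerivAt (fun y ↦ c / f y) ((0 * f x - c * f') / f x ^ 2) x :=
    (hasDerivAt_const x c).div hf hx
  rw [hdiv.deriv, div_le_iff₀ (by positivity), zero_mul, zero_mul, zero_sub, neg_nonpos]
  exact mul_nonneg_iff_of_pos_left hc

section RobinDenominator

variable {n : ℕ} {β R : ℝ}

theorem hasDerivAt_robinDenominator (hn : 2 ≤ n) (hR : R ≠ 0) :
    HasDerivAt (fun r ↦ r ^ ((1 : ℤ) - n) + β * (fundamentalSolution n r - fundamentalSolution n 1))
      (R ^ (-(n : ℤ)) * (1 - n + β * R)) R := by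
  refine ((hasDerivAt_zpow _ R (Or.inl hR)).add
    (((hasDerivAt_fundamentalSolution hn hR).sub_const _).const_mul β)).congr_deriv ?_
  rw [show (1 : ℤ) - n - 1 = -(n : ℤ) by ring, show (1 : ℤ) - n = -(n : ℤ) + 1 by ring,
    zpow_add_one₀ hR]
  push_cast
  ring

theorem robinDenominator_pos (hn : 2 ≤ n) (hβ : 0 ≤ β) (hR : 1 ≤ R) :
    0 < R ^ ((1 : ℤ) - n) + β * (fundamentalSolution n R - fundamentalSolution n 1) := by
  have hR0 : 0 < R := zero_lt_one.trans_le hR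
  have hmono : fundamentalSolution n 1 ≤ fundamentalSolution n R :=
    (strictMonoOn_fundamentalSolution hn).monotoneOn (mem_Ioi.2 zero_lt_one) (mem_Ioi.2 hR0) hR
  have hflux := mul_nonneg hβ (sub_nonneg.2 hmono)
  have hpow := zpow_pos hR0 ((1 : ℤ) - n)
  linarith

end RobinDenominator

theorem stmt_1 (n : ℕ) (hn : 2 ≤ n) (β : ℝ) (hβ : 0 < β) (ω : ℝ)
    (hω : ω = (MeasureTheory.volume (Metric.ball (0 : EuclideanSpace ℝ (Fin n)) 1)).toReal)
    (Phi : ℝ → ℝ)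
    (hPhi : ∀ ρ : ℝ, Phi ρ = if n = 2 then Real.log ρ else -1 / (((n : ℝ) - 2) * ρ ^ (n - 2)))
    (E : ℝ → ℝ)
    (hE : ∀ R : ℝ, E R =
      β * ((n : ℝ) * ω) * ((1 : ℝ) ^ ((1 : ℤ) - n)) /
        (R ^ ((1 : ℤ) - n) + β * (Phi R - Phi 1))) :
    ∀ R : ℝ, 1 ≤ R → (deriv E R ≤ 0 ↔ ((n : ℝ) - 1) / β ≤ R) := by
  intro R hR
  have hR0 : 0 < R := zero_lt_one.trans_le hR
  have hω0 : 0 < ω := hω ▸ ENNReal.toReal_pos (Metric.measure_ball_pos _ _ one_pos).ne'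
    measure_ball_lt_top.ne
  have hn0 : (0 : ℝ) < n := by positivity
  obtain rfl : Phi = fundamentalSolution n := funext hPhi
  obtain rfl : E = fun r ↦ β * (n * ω) * 1 ^ ((1 : ℤ) - n) /
      (r ^ ((1 : ℤ) - n) + β * (fundamentalSolution n r - fundamentalSolution n 1)) := funext hE
  rw [deriv_const_div_nonpos_iff (by positivity) (hasDerivAt_robinDenominator hn hR0.ne')
    (robinDenominator_pos hn hβ.le hR).ne', mul_nonneg_iff_of_pos_left (zpow_pos hR0 _),
    div_le_iff₀ hβ]
  constructor <;> intro h <;> linarith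
end

section
/- Let n ≥ 3 and 0 < β ≤ n−2. Then for all R ≥ 1, E_β(B_1,B_R) ≥ E_β(B_1,B_1), i.e., the function R ↦ (β n ω_n)/(R^{1−n} + β(1/(n−2) − 1/((n−2)R^{n−2}))) attains its minimum on [1,∞) at R = 1. -/
/-!
With `Φ(ρ) = -1 / ((n - 2) ρ^(n-2))`, the energy is `β n ω / D(R)` where
`D(R) = Φ'(R) + β (Φ(R) - Φ(1))` and `D(1) = 1`. Writing `s = R^(2-n) ∈ (0, 1]`, one has
`Φ'(R) = R^(1-n) ≤ s` and `β (Φ(R) - Φ(1)) = β (1 - s) / (n - 2) ≤ 1 - s` because `β ≤ n - 2`,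
so `0 < D(R) ≤ 1` and the energy can only grow.
-/

noncomputable def robinDenom (n : ℕ) (β R : ℝ) : ℝ :=
  R ^ ((1 : ℤ) - n) + β * (1 / ((n : ℝ) - 2) - 1 / (((n : ℝ) - 2) * R ^ (n - 2)))

section robinDenom

variable {n : ℕ} {β R : ℝ}

@[simp]
lemma robinDenom_one : robinDenom n β 1 = 1 := by
  simp [robinDenom]

lemma zpow_one_sub_le_inv_pow_sub_two (hn : 2 ≤ n) (hR : 1 ≤ R) :
    R ^ ((1 : ℤ) - n) ≤ (R ^ (n - 2))⁻¹ := by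
  rw [← zpow_natCast, ← zpow_neg, Nat.cast_sub hn]
  exact zpow_le_zpow_right₀ hR (by push_cast; omega)

lemma one_div_sub_one_div_mul_eq (a t : ℝ) :
    1 / a - 1 / (a * t) = (1 - t⁻¹) / a := by
  rw [one_div, one_div, mul_inv]
  ring

lemma robinDenom_pos (hn : 2 < n) (hβ : 0 ≤ β) (hR : 1 ≤ R) : 0 < robinDenom n β R := by
  have hn2 : (0 : ℝ) < (n : ℝ) - 2 := sub_pos.2 (by exact_mod_cast hn)
  have hpow : 0 < R ^ ((1 : ℤ) - n) := zpow_pos (by linarith) _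
  have hinv : 0 ≤ 1 - (R ^ (n - 2))⁻¹ := sub_nonneg.2 (inv_le_one_of_one_le₀ (one_le_pow₀ hR))
  have hβfrac : 0 ≤ β * ((1 - (R ^ (n - 2))⁻¹) / ((n : ℝ) - 2)) := by positivity
  rw [robinDenom, one_div_sub_one_div_mul_eq]
  linarith

lemma robinDenom_le_one (hn : 2 < n) (hβ : β ≤ (n : ℝ) - 2) (hR : 1 ≤ R) :
    robinDenom n β R ≤ 1 := by
  have hn2 : (0 : ℝ) < (n : ℝ) - 2 := sub_pos.2 (by exact_mod_cast hn)
  have hinv : 0 ≤ 1 - (R ^ (n - 2))⁻¹ := sub_nonneg.2 (inv_le_one_of_one_le₀ (one_le_pow₀ hR))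
  have hβfrac : β * ((1 - (R ^ (n - 2))⁻¹) / ((n : ℝ) - 2)) ≤ 1 - (R ^ (n - 2))⁻¹ := by
    rw [mul_div_assoc', div_le_iff₀ hn2, mul_comm]
    exact mul_le_mul_of_nonneg_left hβ hinv
  rw [robinDenom, one_div_sub_one_div_mul_eq]
  linarith [zpow_one_sub_le_inv_pow_sub_two hn.le hR]

end robinDenom

theorem stmt_4 (n : ℕ) (hn : 3 ≤ n) (β : ℝ) (hβ0 : 0 < β) (hβ : β ≤ (n : ℝ) - 2) (ω : ℝ)
    (hω : ω = (MeasureTheory.volume (Metric.ball (0 : EuclideanSpace ℝ (Fin n)) 1)).toReal)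
    (E : ℝ → ℝ)
    (hE : ∀ R : ℝ, E R =
      β * (n : ℝ) * ω /
        (R ^ ((1 : ℤ) - n) +
          β * (1 / ((n : ℝ) - 2) - 1 / (((n : ℝ) - 2) * R ^ (n - 2))))) :
    ∀ R : ℝ, 1 ≤ R → E 1 ≤ E R := by
  intro R hR
  have hE' : ∀ R, E R = β * n * ω / robinDenom n β R := hE
  have hC : 0 ≤ β * n * ω := by rw [hω]; positivity
  calc E 1 = β * n * ω / 1 := by rw [hE', robinDenom_one]
    _ ≤ β * n * ω / robinDenom n β R :=
      div_le_div_of_nonneg_left hC (robinDenom_pos hn hβ0.le hR) (robinDenom_le_one hn hβ hR)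
    _ = E R := (hE' R).symm
end

section
/- Let n ≥ 2, β > 0, R > 1, and let u*(x) = 1 − β(Φ_n(|x|) − Φ_n(1))/(Φ_n'(R) + β(Φ_n(R) − Φ_n(1))) for 1 ≤ |x| ≤ R. Then |∇u*|/u* ≤ β on B_R \ B_1 if and only if for every ρ ∈ [1,R], E_β(B_1,B_ρ) ≥ E_β(B_1,B_R), where E_β(B_1,B_ρ) = (β n ω_n)/(Φ_n'(ρ) + β(Φ_n(ρ) − Φ_n(1))). -/
/-!
Write `F(ρ) = Φ'(ρ) + β (Φ(ρ) - Φ(1))`, so that `E_β(B_1, B_ρ) = β n ω_n / F(ρ)` and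
`u* = 1 - β (Φ - Φ(1)) / F(R)`. Since `Φ' > 0`, `Φ` increases, so on `[1, R]` both `F > 0` and
`u*(r) = (Φ'(R) + β (Φ(R) - Φ(r))) / F(R) > 0`, while `|u*'(r)| = β Φ'(r) / F(R)`. Hence
`|u*'(r)| / u*(r) ≤ β` iff `Φ'(r) ≤ Φ'(R) + β (Φ(R) - Φ(r))`, i.e. `F(r) ≤ F(R)`, which says
`E_β(B_1, B_R) ≤ E_β(B_1, B_r)`.
-/

open Real Set MeasureTheory

/-- The paper's `Φ_n`. -/
noncomputable def radialPhi (n : ℕ) (ρ : ℝ) : ℝ :=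
  if n = 2 then Real.log ρ else -1 / (((n : ℝ) - 2) * ρ ^ (n - 2))

lemma hasDerivAt_radialPhi {n : ℕ} (hn : 2 ≤ n) {r : ℝ} (hr : 0 < r) :
    HasDerivAt (radialPhi n) (r ^ ((1 : ℤ) - n)) r := by
  unfold radialPhi
  rcases hn.eq_or_lt with rfl | hn3
  · simpa [zpow_neg_one] using Real.hasDerivAt_log hr.ne'
  · set k : ℤ := 2 - n with hk_def
    have hk : (k : ℝ) ≠ 0 := by
      have : (2 : ℝ) < n := by exact_mod_cast hn3
      push_cast [hk_def]; linarith
    -- `Φ_n(ρ) = ρ^k / k` as an identity of functions, thanks to `0⁻¹ = 0`.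
    have hform : (fun ρ : ℝ => -1 / (((n : ℝ) - 2) * ρ ^ (n - 2))) =
        fun ρ => (k : ℝ)⁻¹ * ρ ^ k := by
      funext ρ
      rw [show k = -((n - 2 : ℕ) : ℤ) by omega, zpow_neg, zpow_natCast, Nat.cast_sub hn]
      push_cast
      rw [inv_neg, div_eq_mul_inv, mul_inv]
      ring
    simp only [if_neg hn3.ne', hform]
    refine ((hasDerivAt_zpow k r (Or.inl hr.ne')).const_mul (k : ℝ)⁻¹).congr_deriv ?_
    rw [inv_mul_cancel_left₀ hk]
    congr 1
    omega

section RobinProfile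

variable {Φ Φ' U : ℝ → ℝ} {β R : ℝ}

lemma monotoneOn_Icc_of_hasDerivAt_nonneg {a b : ℝ}
    (hΦ : ∀ r ∈ Icc a b, HasDerivAt Φ (Φ' r) r) (hΦ' : ∀ r ∈ Icc a b, 0 ≤ Φ' r) :
    MonotoneOn Φ (Icc a b) :=
  monotoneOn_of_hasDerivWithinAt_nonneg (convex_Icc a b)
    (fun x hx => (hΦ x hx).continuousAt.continuousWithinAt)
    (fun x hx => (hΦ x (interior_subset hx)).hasDerivWithinAt)
    (fun x hx => hΦ' x (interior_subset hx))

lemma robinDenominator_pos_s5 (hβ : 0 < β) (hΦ : ∀ r ∈ Icc 1 R, HasDerivAt Φ (Φ' r) r)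
    (hΦ' : ∀ r ∈ Icc 1 R, 0 < Φ' r) {r : ℝ} (hr : r ∈ Icc 1 R) :
    0 < Φ' r + β * (Φ r - Φ 1) := by
  have hmono := monotoneOn_Icc_of_hasDerivAt_nonneg hΦ fun x hx => (hΦ' x hx).le
  have h1 : Φ 1 ≤ Φ r := hmono ⟨le_rfl, hr.1.trans hr.2⟩ hr hr.1
  nlinarith [hΦ' r hr]

lemma abs_deriv_div_le_iff (hβ : 0 < β) (hΦ : ∀ r ∈ Icc 1 R, HasDerivAt Φ (Φ' r) r)
    (hΦ' : ∀ r ∈ Icc 1 R, 0 < Φ' r)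
    (hU : ∀ r, U r = 1 - β * (Φ r - Φ 1) / (Φ' R + β * (Φ R - Φ 1)))
    {r : ℝ} (hr : r ∈ Icc 1 R) :
    |deriv U r| / U r ≤ β ↔ Φ' r + β * (Φ r - Φ 1) ≤ Φ' R + β * (Φ R - Φ 1) := by
  set D := Φ' R + β * (Φ R - Φ 1)
  have hR : R ∈ Icc 1 R := ⟨hr.1.trans hr.2, le_rfl⟩
  have hD : 0 < D := robinDenominator_pos_s5 hβ hΦ hΦ' hR
  have hderiv : deriv U r = -(β * Φ' r / D) := by
    rw [funext hU]
    exact ((((hΦ r hr).sub_const (Φ 1)).const_mul β).div_const D).const_sub 1 |>.deriv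
  have hUr : U r = (Φ' R + β * (Φ R - Φ r)) / D := by
    rw [hU, eq_div_iff hD.ne']
    field_simp
    ring
  have hnum : 0 < Φ' R + β * (Φ R - Φ r) := by
    have : Φ r ≤ Φ R :=
      monotoneOn_Icc_of_hasDerivAt_nonneg hΦ (fun x hx => (hΦ' x hx).le) hr hR hr.2
    nlinarith [hΦ' R hR]
  rw [hderiv, hUr, abs_neg, abs_of_pos (by have := hΦ' r hr; positivity),
    div_div_div_cancel_right₀ hD.ne', div_le_iff₀ hnum, mul_le_mul_iff_right₀ hβ]
  constructor <;> intro h <;> linarith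

end RobinProfile

theorem stmt_5_general (n : ℕ) (hn : 2 ≤ n) (β R ω : ℝ) (hβ : 0 < β)
    (hω : ω = (MeasureTheory.volume (Metric.ball (0 : EuclideanSpace ℝ (Fin n)) 1)).toReal)
    (Phi : ℝ → ℝ)
    (hPhi : ∀ ρ : ℝ, Phi ρ = if n = 2 then Real.log ρ else -1 / (((n : ℝ) - 2) * ρ ^ (n - 2)))
    (U : ℝ → ℝ)
    (hU : ∀ r : ℝ, U r =
      1 - β * (Phi r - Phi 1) / (R ^ ((1 : ℤ) - n) + β * (Phi R - Phi 1)))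
    (E : ℝ → ℝ)
    (hE : ∀ ρ : ℝ, E ρ =
      β * (n : ℝ) * ω / (ρ ^ ((1 : ℤ) - n) + β * (Phi ρ - Phi 1))) :
    (∀ r ∈ Set.Icc (1 : ℝ) R, |deriv U r| / U r ≤ β) ↔
      ∀ ρ ∈ Set.Icc (1 : ℝ) R, E R ≤ E ρ := by
  obtain rfl : Phi = radialPhi n := funext hPhi
  have hω0 : 0 < ω := hω ▸ ENNReal.toReal_pos
    (Metric.measure_ball_pos volume _ one_pos).ne' measure_ball_lt_top.ne
  have hΦ : ∀ r ∈ Icc 1 R, HasDerivAt (radialPhi n) (r ^ ((1 : ℤ) - n)) r :=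
    fun r hr => hasDerivAt_radialPhi hn (one_pos.trans_le hr.1)
  have hΦ' : ∀ r ∈ Icc 1 R, (0 : ℝ) < r ^ ((1 : ℤ) - n) :=
    fun r hr => zpow_pos (one_pos.trans_le hr.1) _
  refine forall₂_congr fun r hr => ?_
  have hR : R ∈ Icc 1 R := ⟨hr.1.trans hr.2, le_rfl⟩
  rw [abs_deriv_div_le_iff hβ hΦ hΦ' hU hr, hE, hE, div_le_div_iff_of_pos_left (by positivity)
    (robinDenominator_pos_s5 hβ hΦ hΦ' hR) (robinDenominator_pos_s5 hβ hΦ hΦ' hr)]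

theorem stmt_5 (n : ℕ) (hn : 2 ≤ n) (β R ω : ℝ) (hβ : 0 < β) (hR : 1 < R)
    (hω : ω = (MeasureTheory.volume (Metric.ball (0 : EuclideanSpace ℝ (Fin n)) 1)).toReal)
    (Phi : ℝ → ℝ)
    (hPhi : ∀ ρ : ℝ, Phi ρ = if n = 2 then Real.log ρ else -1 / (((n : ℝ) - 2) * ρ ^ (n - 2)))
    (U : ℝ → ℝ)
    (hU : ∀ r : ℝ, U r =
      1 - β * (Phi r - Phi 1) / (R ^ ((1 : ℤ) - n) + β * (Phi R - Phi 1)))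
    (E : ℝ → ℝ)
    (hE : ∀ ρ : ℝ, E ρ =
      β * (n : ℝ) * ω / (ρ ^ ((1 : ℤ) - n) + β * (Phi ρ - Phi 1))) :
    (∀ r ∈ Set.Icc (1 : ℝ) R, |deriv U r| / U r ≤ β) ↔
      ∀ ρ ∈ Set.Icc (1 : ℝ) R, E R ≤ E ρ :=
  stmt_5_general n hn β R ω hβ hω Phi hPhi U hU E hE
end

section
/- Let n ≥ 3 and n−2 < β < n−1. Then there exists a unique R_β > (n−1)/β such that E_β(B_1, B_{R_β}) = E_β(B_1, B_1) = β n ω_n, where E_β(B_1,B_R) = (β n ω_n)/(R^{1−n} + β(1/(n−2) − 1/((n−2)R^{n−2}))). Moreover E_β(B_1,B_R) increases on [1,(n−1)/β] and decreases on [(n−1)/β,∞). -/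
/-!
Up to the factor `β n ω_n`, the energy is the reciprocal of
`D(R) = R^{1-n} + β/(n-2) · (1 - R^{2-n})`, with `D(1) = 1` and
`D'(R) = R^{-n} (βR - (n-1))`. So `D` decreases on `(0, (n-1)/β]` and increases afterwards,
towards its limit `β/(n-2) > 1`. Hence `D((n-1)/β) < 1`, and by the intermediate value theorem
and strict monotonicity `D` takes the value `1` exactly once beyond `(n-1)/β`.
-/

open Real Set MeasureTheory Filter Topology

section

variable {α 𝕜 : Type*} [Preorder α] [Semifield 𝕜] [LinearOrder 𝕜] [IsStrictOrderedRing 𝕜]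
  {f : α → 𝕜} {s : Set α} {c : 𝕜}

lemma AntitoneOn.const_div_of_pos (hf : AntitoneOn f s) (hpos : ∀ x ∈ s, 0 < f x) (hc : 0 ≤ c) :
    MonotoneOn (fun x => c / f x) s :=
  fun _ ha b hb hab => div_le_div_of_nonneg_left hc (hpos b hb) (hf ha hb hab)

lemma MonotoneOn.const_div_of_pos (hf : MonotoneOn f s) (hpos : ∀ x ∈ s, 0 < f x) (hc : 0 ≤ c) :
    AntitoneOn (fun x => c / f x) s :=
  fun a ha _ hb hab => div_le_div_of_nonneg_left hc (hpos a ha) (hf ha hb hab)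

end

noncomputable def insulationDenom (n : ℕ) (β R : ℝ) : ℝ :=
  R ^ ((1 : ℤ) - n) + β / (n - 2) * (1 - R ^ ((2 : ℤ) - n))

namespace insulationDenom

variable {n : ℕ} {β : ℝ}

@[simp]
lemma apply_one : insulationDenom n β 1 = 1 := by
  simp [insulationDenom]

lemma eq_energy_denom (hn : 2 ≤ n) (R : ℝ) :
    R ^ ((1 : ℤ) - n) + β * (1 / ((n : ℝ) - 2) - 1 / (((n : ℝ) - 2) * R ^ (n - 2))) =
      insulationDenom n β R := by
  have hpow : R ^ ((2 : ℤ) - n) = (R ^ (n - 2))⁻¹ := by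
    rw [← zpow_natCast, ← zpow_neg, Nat.cast_sub hn]
    ring_nf
  rw [insulationDenom, hpow, one_div, one_div, mul_inv]
  ring

lemma hasDerivAt (hn : (n : ℝ) ≠ 2) {R : ℝ} (hR : R ≠ 0) :
    HasDerivAt (insulationDenom n β) (R ^ (-(n : ℤ)) * (β * R - (n - 1))) R := by
  have hD : HasDerivAt (insulationDenom n β) _ R :=
    (hasDerivAt_zpow ((1 : ℤ) - n) R (Or.inl hR)).add
      (((hasDerivAt_zpow ((2 : ℤ) - n) R (Or.inl hR)).const_sub 1).const_mul (β / (n - 2)))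
  convert hD using 1
  have hn2 : (n : ℝ) - 2 ≠ 0 := sub_ne_zero.mpr hn
  rw [show (1 : ℤ) - n - 1 = -n by ring, show (2 : ℤ) - n - 1 = -n + 1 by ring,
    zpow_add₀ hR, zpow_one]
  push_cast
  field_simp
  ring

lemma continuousOn (hn : (n : ℝ) ≠ 2) : ContinuousOn (insulationDenom n β) (Ioi 0) :=
  fun _ hR => (hasDerivAt hn (ne_of_gt hR)).continuousAt.continuousWithinAt

lemma strictAntiOn (hn : 2 < n) (hβ : 0 < β) :
    StrictAntiOn (insulationDenom n β) (Ioc 0 ((n - 1) / β)) := by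
  have hn' : (n : ℝ) ≠ 2 := by exact_mod_cast hn.ne'
  refine strictAntiOn_of_deriv_neg (convex_Ioc _ _)
    ((continuousOn hn').mono Ioc_subset_Ioi_self) fun R hR => ?_
  rw [interior_Ioc] at hR
  rw [(hasDerivAt hn' hR.1.ne').deriv]
  have hβR : β * R < n - 1 := by rw [← lt_div_iff₀' hβ]; exact hR.2
  exact mul_neg_of_pos_of_neg (zpow_pos hR.1 _) (by linarith)

lemma strictMonoOn (hn : 2 < n) (hβ : 0 < β) :
    StrictMonoOn (insulationDenom n β) (Ici ((n - 1) / β)) := by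
  have hn' : (n : ℝ) ≠ 2 := by exact_mod_cast hn.ne'
  have hn'' : (2 : ℝ) < n := by exact_mod_cast hn
  have hR₀ : 0 < ((n : ℝ) - 1) / β := div_pos (by linarith) hβ
  refine strictMonoOn_of_deriv_pos (convex_Ici _)
    ((continuousOn hn').mono fun R hR => hR₀.trans_le hR) fun R hR => ?_
  rw [interior_Ici] at hR
  have hR0 : 0 < R := hR₀.trans hR
  rw [(hasDerivAt hn' hR0.ne').deriv]
  have hβR : n - 1 < β * R := by rw [← div_lt_iff₀' hβ]; exact hR
  exact mul_pos (zpow_pos hR0 _) (by linarith)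

lemma pos (hn : 2 ≤ n) (hβ : 0 ≤ β) {R : ℝ} (hR : 1 ≤ R) : 0 < insulationDenom n β R := by
  have hn' : (2 : ℝ) ≤ n := by exact_mod_cast hn
  have hdecay : R ^ ((2 : ℤ) - n) ≤ 1 := zpow_le_one_of_nonpos₀ hR (by omega)
  have hfirst : 0 < R ^ ((1 : ℤ) - n) := zpow_pos (one_pos.trans_le hR) _
  have hsecond : 0 ≤ β / (n - 2) * (1 - R ^ ((2 : ℤ) - n)) :=
    mul_nonneg (div_nonneg hβ (by linarith)) (by linarith)
  exact add_pos_of_pos_of_nonneg hfirst hsecond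

lemma tendsto_atTop (hn : 2 < n) :
    Tendsto (insulationDenom n β) atTop (𝓝 (β / (n - 2))) := by
  have h₁ := tendsto_zpow_atTop_zero (𝕜 := ℝ) (show (1 : ℤ) - n < 0 by omega)
  have h₂ := tendsto_zpow_atTop_zero (𝕜 := ℝ) (show (2 : ℤ) - n < 0 by omega)
  have h := h₁.add ((h₂.const_sub 1).const_mul (β / (n - 2)))
  rwa [sub_zero, mul_one, zero_add] at h

lemma existsUnique_eq_one (hn : 2 < n) (hβl : (n : ℝ) - 2 < β) (hβu : β < n - 1) :
    ∃! R, (n - 1) / β < R ∧ insulationDenom n β R = 1 := by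
  have hn' : (2 : ℝ) < n := by exact_mod_cast hn
  have hβ : 0 < β := by linarith
  set R₀ := ((n : ℝ) - 1) / β
  have hR₀ : 1 < R₀ := (one_lt_div hβ).mpr hβu
  have hbelow : insulationDenom n β R₀ < 1 := by
    simpa using strictAntiOn hn hβ ⟨one_pos, hR₀.le⟩ ⟨one_pos.trans hR₀, le_rfl⟩ hR₀
  have hlimit : 1 < β / (n - 2) := (one_lt_div (by linarith)).mpr hβl
  obtain ⟨M, hM, hR₀M⟩ :=
    (((tendsto_atTop hn).eventually (lt_mem_nhds hlimit)).and (eventually_ge_atTop R₀)).exists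
  obtain ⟨R, hR, hR1⟩ := intermediate_value_Ioc hR₀M
    ((continuousOn hn'.ne').mono fun x hx => (one_pos.trans hR₀).trans_le hx.1) ⟨hbelow, hM.le⟩
  exact ⟨R, ⟨hR.1, hR1⟩, fun R' hR' =>
    (strictMonoOn hn hβ).injOn hR'.1.le hR.1.le (hR'.2.trans hR1.symm)⟩

end insulationDenom

theorem stmt_6 (n : ℕ) (hn : 3 ≤ n) (β ω : ℝ)
    (hβl : (n : ℝ) - 2 < β) (hβu : β < (n : ℝ) - 1)
    (hω : ω = (MeasureTheory.volume (Metric.ball (0 : EuclideanSpace ℝ (Fin n)) 1)).toReal)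
    (E : ℝ → ℝ)
    (hE : ∀ R : ℝ, E R =
      β * (n : ℝ) * ω /
        (R ^ ((1 : ℤ) - n) +
          β * (1 / ((n : ℝ) - 2) - 1 / (((n : ℝ) - 2) * R ^ (n - 2))))) :
    (∃! Rβ : ℝ, ((n : ℝ) - 1) / β < Rβ ∧ E Rβ = β * (n : ℝ) * ω) ∧
      E 1 = β * (n : ℝ) * ω ∧
      MonotoneOn E (Set.Icc 1 (((n : ℝ) - 1) / β)) ∧
      AntitoneOn E (Set.Ici (((n : ℝ) - 1) / β)) := by
  have hn' : (3 : ℝ) ≤ n := by exact_mod_cast hn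
  have hβ : 0 < β := by linarith
  have hω : 0 < ω := hω ▸ ENNReal.toReal_pos (Metric.measure_ball_pos volume 0 one_pos).ne'
    measure_ball_lt_top.ne
  have hc : 0 < β * n * ω := by positivity
  obtain rfl : E = fun R => β * n * ω / insulationDenom n β R :=
    funext fun R => by rw [hE, insulationDenom.eq_energy_denom (by omega)]
  have hR₀ : 1 ≤ ((n : ℝ) - 1) / β := (one_le_div hβ).mpr hβu.le
  have hpos : ∀ R ∈ Ici (1 : ℝ), 0 < insulationDenom n β R :=
    fun R hR => insulationDenom.pos (by omega) hβ.le hR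
  refine ⟨?_, by simp, ?_, ?_⟩
  · simpa only [div_eq_mul_inv, mul_eq_left₀ hc.ne', inv_eq_one] using
      insulationDenom.existsUnique_eq_one (by omega) hβl hβu
  · exact ((insulationDenom.strictAntiOn (by omega) hβ).antitoneOn.mono
      fun R hR => ⟨one_pos.trans_le hR.1, hR.2⟩).const_div_of_pos
      (fun R hR => hpos R hR.1) hc.le
  · exact (insulationDenom.strictMonoOn (by omega) hβ).monotoneOn.const_div_of_pos
      (fun R hR => hpos R (hR₀.trans hR)) hc.le
end

section
/- Let n ≥ 2 and Θ : [0,1] → [0,∞) be nondecreasing with Θ(0) = 0, differentiable at 1 with Θ'(1)² > 4(n−1)Θ(1) and Θ(1) > 0. Then there exists ε_0 > 0 such that for all ε ∈ (0, ε_0), n ω_n (1+ε)^{n−1} Θ(1 − Θ'(1)ε/2) + ω_n((1+ε)^n − 1) Θ'(1)²/4 < n ω_n Θ(1). -/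
open Set MeasureTheory Filter Topology

/-!
The left-hand side is the energy of the linear profile `u(x) = 1 - (|x| - 1) Θ'(1) / 2` on an
insulating layer `1 < |x| < 1 + ε` around the unit ball: `Θ` of the boundary value times the
area of the outer sphere, plus `|∇u|² = Θ'(1)² / 4` times the volume of the layer. As a
function of `ε ≥ 0` it equals `n ω Θ(1)` at `ε = 0` and has right derivative
`n ω ((n - 1) Θ(1) - Θ'(1)² / 4) < 0` there. Monotonicity of `Θ` gives `Θ'(1) ≥ 0`, so the
boundary value `1 - Θ'(1) ε / 2` stays in the range `≤ 1` where `Θ` is differentiable.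
-/

lemma accPt_Icc_right {α : Type*} [TopologicalSpace α] [LinearOrder α] [OrderTopology α]
    [DenselyOrdered α] {a b : α} (hab : a < b) : AccPt b (𝓟 (Icc a b)) := by
  rw [accPt_principal_iff_nhdsWithin, Icc_sdiff_right]
  exact right_nhdsWithin_Ico_neBot hab

lemma HasDerivWithinAt.exists_Ioo_lt_of_neg {f : ℝ → ℝ} {f' x : ℝ}
    (hf : HasDerivWithinAt f f' (Ici x) x) (hf' : f' < 0) :
    ∃ δ > 0, ∀ y ∈ Ioo x (x + δ), f y < f x := by
  have hslope : ∀ᶠ y in 𝓝[>] x, slope f x y < 0 := by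
    simpa only [Ici_sdiff_left] using hf.limsup_slope_le hf'
  obtain ⟨u, hxu, hu⟩ := mem_nhdsGT_iff_exists_Ioo_subset.1 hslope
  refine ⟨u - x, sub_pos.2 hxu, fun y hy => ?_⟩
  have hy' : y ∈ Ioo x u := ⟨hy.1, by linarith [hy.2]⟩
  have hneg : slope f x y < 0 := hu hy'
  rw [slope_def_field] at hneg
  exact sub_neg.1 (neg_of_div_neg_left hneg (sub_pos.2 hy'.1).le)

lemma hasDerivAt_one_add_pow_zero (k : ℕ) :
    HasDerivAt (fun ε : ℝ => (1 + ε) ^ k) k 0 := by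
  simpa using ((hasDerivAt_id (0 : ℝ)).const_add 1).fun_pow k

noncomputable def layerEnergy (n : ℕ) (ω : ℝ) (Θ : ℝ → ℝ) (a ε : ℝ) : ℝ :=
  n * ω * (1 + ε) ^ (n - 1) * Θ (1 - a * ε / 2) + ω * ((1 + ε) ^ n - 1) * a ^ 2 / 4

@[simp]
lemma layerEnergy_zero (n : ℕ) (ω : ℝ) (Θ : ℝ → ℝ) (a : ℝ) :
    layerEnergy n ω Θ a 0 = n * ω * Θ 1 := by
  simp [layerEnergy]

lemma HasDerivWithinAt.comp_one_sub_mul_div_two {Θ : ℝ → ℝ} {a : ℝ}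
    (hΘ : HasDerivWithinAt Θ a (Iic 1) 1) (ha : 0 ≤ a) :
    HasDerivWithinAt (fun ε => Θ (1 - a * ε / 2)) (-(a ^ 2 / 2)) (Ici 0) 0 := by
  have hinner : HasDerivAt (fun ε : ℝ => 1 - a * ε / 2) (-(a / 2)) 0 := by
    simpa using (((hasDerivAt_id (0 : ℝ)).const_mul a).div_const 2).const_sub 1
  have hmaps : MapsTo (fun ε : ℝ => 1 - a * ε / 2) (Ici 0) (Iic 1) := fun ε hε => by
    simp only [mem_Iic, sub_le_self_iff]
    exact div_nonneg (mul_nonneg ha hε) zero_le_two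
  have hΘ' : HasDerivWithinAt Θ a (Iic 1) (1 - a * 0 / 2) := by simpa using hΘ
  exact (hΘ'.comp 0 hinner.hasDerivWithinAt hmaps).congr_deriv (by ring)

lemma hasDerivWithinAt_layerEnergy (n : ℕ) (ω : ℝ) {Θ : ℝ → ℝ} {a : ℝ}
    (hΘ : HasDerivWithinAt Θ a (Iic 1) 1) (ha : 0 ≤ a) :
    HasDerivWithinAt (layerEnergy n ω Θ a) (n * ω * ((n - 1 : ℕ) * Θ 1 - a ^ 2 / 4))
      (Ici 0) 0 := by
  have hboundary := ((hasDerivAt_one_add_pow_zero (n - 1)).hasDerivWithinAt.const_mul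
    ((n : ℝ) * ω)).mul (hΘ.comp_one_sub_mul_div_two ha)
  have hbulk := ((((hasDerivAt_one_add_pow_zero n).hasDerivWithinAt (s := Ici 0)).sub_const 1
    |>.const_mul ω).mul_const (a ^ 2)).div_const 4
  unfold layerEnergy
  refine (hboundary.add hbulk).congr_deriv ?_
  simp only [mul_zero, zero_div, sub_zero, add_zero, one_pow]
  ring

theorem stmt_12_general (n : ℕ) (hn : 2 ≤ n) (ω : ℝ)
    (hω : ω = (MeasureTheory.volume (Metric.ball (0 : EuclideanSpace ℝ (Fin n)) 1)).toReal)
    (Θ : ℝ → ℝ) (Θ'1 : ℝ)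
    (hmono : MonotoneOn Θ (Set.Icc 0 1))
    (hderiv : HasDerivWithinAt Θ Θ'1 (Set.Iic 1) 1)
    (hcond : 4 * ((n : ℝ) - 1) * Θ 1 < Θ'1 ^ 2) :
    ∃ ε₀ > (0 : ℝ), ∀ ε ∈ Set.Ioo (0 : ℝ) ε₀,
      (n : ℝ) * ω * (1 + ε) ^ (n - 1) * Θ (1 - Θ'1 * ε / 2)
        + ω * ((1 + ε) ^ n - 1) * Θ'1 ^ 2 / 4 < (n : ℝ) * ω * Θ 1 := by
  have hω_pos : 0 < ω := hω ▸ ENNReal.toReal_pos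
    (Metric.measure_ball_pos volume _ one_pos).ne' measure_ball_lt_top.ne
  have hslope : 0 ≤ Θ'1 :=
    (hderiv.mono Icc_subset_Iic_self).nonneg_of_monotoneOn (accPt_Icc_right one_pos) hmono
  have hcoeff : (n : ℝ) * ω * (((n - 1 : ℕ) : ℝ) * Θ 1 - Θ'1 ^ 2 / 4) < 0 := by
    rw [Nat.cast_sub (by omega), Nat.cast_one]
    exact mul_neg_of_pos_of_neg (mul_pos (Nat.cast_pos.2 (by omega)) hω_pos) (by linarith)
  obtain ⟨ε₀, hε₀, hlt⟩ :=
    (hasDerivWithinAt_layerEnergy n ω hderiv hslope).exists_Ioo_lt_of_neg hcoeff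
  refine ⟨ε₀, hε₀, fun ε hε => ?_⟩
  have hε' := hlt ε (by simpa using hε)
  rwa [layerEnergy_zero] at hε'

theorem stmt_12 (n : ℕ) (hn : 2 ≤ n) (ω : ℝ)
    (hω : ω = (MeasureTheory.volume (Metric.ball (0 : EuclideanSpace ℝ (Fin n)) 1)).toReal)
    (Θ : ℝ → ℝ) (Θ'1 : ℝ)
    (hmono : MonotoneOn Θ (Set.Icc 0 1)) (h0 : Θ 0 = 0)
    (hnn : ∀ s ∈ Set.Icc (0 : ℝ) 1, 0 ≤ Θ s)
    (hpos : 0 < Θ 1)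
    (hderiv : HasDerivWithinAt Θ Θ'1 (Set.Iic 1) 1)
    (hcond : 4 * ((n : ℝ) - 1) * Θ 1 < Θ'1 ^ 2) :
    ∃ ε₀ > (0 : ℝ), ∀ ε ∈ Set.Ioo (0 : ℝ) ε₀,
      (n : ℝ) * ω * (1 + ε) ^ (n - 1) * Θ (1 - Θ'1 * ε / 2)
        + ω * ((1 + ε) ^ n - 1) * Θ'1 ^ 2 / 4 < (n : ℝ) * ω * Θ 1 :=
  stmt_12_general n hn ω hω Θ Θ'1 hmono hderiv hcond
end
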